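/- Define t(θ) = (−2 sin²θ + (2θ − cos θ) sin θ + θ)/(2θ²) for θ ∈ (0, π/2). Then t'(θ) = (cos θ + 2 sin θ − θ)(sin θ − θ cos θ)/θ³, and both factors in the numerator are positive on (0, θ_max] where θ_max < π/2 is the solution of 1 = θ/sin²θ − cos θ/sin θ; hence t is strictly increasing on (0, θ_max]. -/

import Mathlib

/-!
Differentiating the quotient and using `sin² + cos² = 1`, the numerator of `t'` factors as
`(cos θ + 2 sin θ - θ) (sin θ - θ cos θ)`. On `(0, π/2)` the first factor is positive by Jordan's
inequality `sin θ ≥ 2θ/π` (with `π < 4`), the second by `θ < tan θ`; so `t' > 0` on all of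
`(0, π/2)` and `t` is strictly increasing there, in particular on `(0, θmax]`.
-/

open Real Set

/-- The paper's `t`: the area of `S₄(a, θ)` with `a = 1 - sin θ / θ` substituted. -/
noncomputable def areaT (θ : ℝ) : ℝ :=
  (-2 * sin θ ^ 2 + (2 * θ - cos θ) * sin θ + θ) / (2 * θ ^ 2)

lemma hasDerivAt_areaT {x : ℝ} (hx : x ≠ 0) :
    HasDerivAt areaT ((cos x + 2 * sin x - x) * (sin x - x * cos x) / x ^ 3) x := by
  have hnum := ((((hasDerivAt_sin x).pow 2).const_mul (-2)).add
    ((((hasDerivAt_id' x).const_mul 2).sub (hasDerivAt_cos x)).mul (hasDerivAt_sin x))).add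
    (hasDerivAt_id' x)
  have hden := (hasDerivAt_pow 2 x).const_mul (2 : ℝ)
  refine (hnum.div hden (by positivity)).congr_deriv ?_
  simp only [Pi.add_apply, Pi.sub_apply, Pi.mul_apply, Pi.pow_apply]
  field_simp
  linear_combination x ^ 2 * sin_sq_add_cos_sq x

lemma cos_add_two_sin_sub_self_pos {x : ℝ} (hx₀ : 0 < x) (hx : x ≤ π / 2) :
    0 < cos x + 2 * sin x - x := by
  have hcos : 0 ≤ cos x := cos_nonneg_of_mem_Icc ⟨by linarith [pi_pos], hx⟩
  have hjordan : 2 / π * x ≤ sin x := mul_le_sin hx₀.le hx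
  have hx_lt : x < 2 * (2 / π * x) := by
    rw [← mul_assoc, ← mul_div_assoc, div_mul_eq_mul_div, lt_div_iff₀ pi_pos]
    nlinarith [pi_lt_four]
  linarith

lemma sin_sub_mul_cos_pos {x : ℝ} (hx₀ : 0 < x) (hx : x < π / 2) :
    0 < sin x - x * cos x := by
  have hcos : 0 < cos x := cos_pos_of_mem_Ioo ⟨by linarith [pi_pos], hx⟩
  have htan := lt_tan hx₀ hx
  rw [tan_eq_sin_div_cos, lt_div_iff₀ hcos] at htan
  linarith

lemma areaT_deriv_pos {x : ℝ} (hx : x ∈ Ioo 0 (π / 2)) :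
    0 < (cos x + 2 * sin x - x) * (sin x - x * cos x) / x ^ 3 := by
  have h₁ := cos_add_two_sin_sub_self_pos hx.1 hx.2.le
  have h₂ := sin_sub_mul_cos_pos hx.1 hx.2
  have hx₀ := hx.1
  positivity

lemma strictMonoOn_areaT : StrictMonoOn areaT (Ioo 0 (π / 2)) := by
  refine strictMonoOn_of_deriv_pos (convex_Ioo _ _) (fun x hx => ?_) fun x hx => ?_
  · exact (hasDerivAt_areaT hx.1.ne').continuousAt.continuousWithinAt
  · rw [interior_Ioo] at hx
    rw [(hasDerivAt_areaT hx.1.ne').deriv]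
    exact areaT_deriv_pos hx

theorem stmt_14_general (θmax : ℝ) (hθ : θmax ∈ Set.Ioo 0 (π/2))
    (t : ℝ → ℝ)
    (ht : ∀ θ ∈ Set.Ioo 0 (π/2),
      t θ = (-2 * (Real.sin θ)^2 + (2*θ - Real.cos θ) * Real.sin θ + θ) / (2 * θ^2)) :
    (∀ θ ∈ Set.Ioo 0 (π/2),
      deriv t θ = (Real.cos θ + 2 * Real.sin θ - θ) * (Real.sin θ - θ * Real.cos θ) / θ^3) ∧
    (∀ θ ∈ Set.Ioc 0 θmax,
      0 < Real.cos θ + 2 * Real.sin θ - θ ∧ 0 < Real.sin θ - θ * Real.cos θ) ∧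
    StrictMonoOn t (Set.Ioc 0 θmax) := by
  have hsub : Ioc 0 θmax ⊆ Ioo 0 (π / 2) := Ioc_subset_Ioo_right hθ.2
  have ht_eq : EqOn areaT t (Ioo 0 (π / 2)) := fun θ hθ => (ht θ hθ).symm
  refine ⟨fun θ hθ => ?_, fun θ hθ => ?_, (strictMonoOn_areaT.congr ht_eq).mono hsub⟩
  · have h_nhds : areaT =ᶠ[nhds θ] t := ht_eq.eventuallyEq_of_mem (isOpen_Ioo.mem_nhds hθ)
    exact (h_nhds.hasDerivAt_iff.mp (hasDerivAt_areaT hθ.1.ne')).deriv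
  · exact ⟨cos_add_two_sin_sub_self_pos hθ.1 (hsub hθ).2.le, sin_sub_mul_cos_pos hθ.1 (hsub hθ).2⟩

theorem stmt_14 (θmax : ℝ) (hθ : θmax ∈ Set.Ioo 0 (π/2))
    (hmax : 1 = θmax / (Real.sin θmax)^2 - Real.cos θmax / Real.sin θmax)
    (t : ℝ → ℝ)
    (ht : ∀ θ ∈ Set.Ioo 0 (π/2),
      t θ = (-2 * (Real.sin θ)^2 + (2*θ - Real.cos θ) * Real.sin θ + θ) / (2 * θ^2)) :
    (∀ θ ∈ Set.Ioo 0 (π/2),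
      deriv t θ = (Real.cos θ + 2 * Real.sin θ - θ) * (Real.sin θ - θ * Real.cos θ) / θ^3) ∧
    (∀ θ ∈ Set.Ioc 0 θmax,
      0 < Real.cos θ + 2 * Real.sin θ - θ ∧ 0 < Real.sin θ - θ * Real.cos θ) ∧
    StrictMonoOn t (Set.Ioc 0 θmax) :=
  stmt_14_general θmax hθ t ht
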